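/- (Sign/epsilon rewriting of the orthogonal determinant-sum.) Let $m\ge 1$, $n\ge m-1$, and fix a parity $\pi\in\{\text{even},\text{odd}\}$. Then $\frac{1}{\mathcal{E}([m])\,\Delta([m])}\sum_{\substack{A\sqcup B=[m]\\ |B|\equiv \pi}} w_A^{n}\, E(A,B)\,\Delta(A)\,\Delta(B)\,(-1)^{S(A,B)-|A|} = (w_1\cdots w_m)^{\frac{n-m+1}{2}} \sum_{\substack{\epsilon\in\{-1,1\}^m\\ \prod_j\epsilon_j=(-1)^{\pi}}} \Big(\prod_{\ell=1}^m w_\ell^{\epsilon_\ell\frac{n-m+1}{2}}\Big)\prod_{1\le q<\ell\le m}\big(1-w_q^{-\epsilon_q}w_\ell^{-\epsilon_\ell}\big)^{-1}$, where $n-m+1$ is assumed even and $(-1)^{\pi}$ is $+1$ for even, $-1$ for odd. -/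

import Mathlib

open Finset

/-- `Δ(A) = ∏_{i<j, i,j ∈ A} (w j - w i)`. -/
def deltaSet {R : Type*} [CommRing R] {n : ℕ} (w : Fin n → R) (A : Finset (Fin n)) : R :=
  ∏ p ∈ (A ×ˢ A).filter (fun p => p.1 < p.2), (w p.2 - w p.1)

/-- `E(A,B) = ∏_{a ∈ A, b ∈ B} (1 - w a * w b)`. -/
def eAB {R : Type*} [CommRing R] {n : ℕ} (w : Fin n → R) (A B : Finset (Fin n)) : R :=
  ∏ a ∈ A, ∏ b ∈ B, (1 - w a * w b)

/-- `W(A,B) = #{(a,b) : a ∈ A, b ∈ B, a > b}`. -/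
def wAB {n : ℕ} (A B : Finset (Fin n)) : ℕ :=
  ((A ×ˢ B).filter (fun p => p.2 < p.1)).card

/-- `S(A,B) = |A||B| + |A|(|A|+1)/2 + W(A,B)`. -/
def sAB {n : ℕ} (A B : Finset (Fin n)) : ℕ :=
  A.card * B.card + A.card * (A.card + 1) / 2 + wAB A B

/-- `ℰ(A) = ∏_{i<j, i,j ∈ A} (1 - w i * w j)` (strict pairs only). -/
def eLt {R : Type*} [CommRing R] {n : ℕ} (w : Fin n → R) (A : Finset (Fin n)) : R :=
  ∏ p ∈ (A ×ˢ A).filter (fun p => p.1 < p.2), (1 - w p.1 * w p.2)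

/-- Sign `±1` (as an integer) attached to a boolean. -/
def sg (b : Bool) : ℤ := if b then 1 else -1


/-- The set of strictly increasing pairs in `Fin m × Fin m`. -/
def pairsLT (m : ℕ) : Finset (Fin m × Fin m) :=
  Finset.univ.filter (fun p : Fin m × Fin m => p.1 < p.2)

lemma mem_pairsLT {m : ℕ} {p : Fin m × Fin m} : p ∈ pairsLT m ↔ p.1 < p.2 := by
  simp [pairsLT]

section Aux
variable {F : Type*} [Field F] {m : ℕ}

lemma prod_pairsLT_mul (v : Fin m → F) :
    ∏ p ∈ pairsLT m, (v p.1 * v p.2) = ∏ i, v i ^ (m - 1) := by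
  have h1 : ∏ p ∈ pairsLT m, (v p.1 * v p.2)
      = ∏ i : Fin m, ∏ j : Fin m, (if i < j then v i * v j else 1) := by
    rw [pairsLT, Finset.prod_filter, ← Finset.univ_product_univ, Finset.prod_product]
  rw [h1]
  have h2 : ∀ i j : Fin m, (if i < j then v i * v j else 1)
      = (if i < j then v i else 1) * (if i < j then v j else 1) := by
    intro i j; split <;> simp
  simp_rw [h2, Finset.prod_mul_distrib]
  have h3 : ∀ i : Fin m, (∏ j : Fin m, if i < j then v i else 1) = v i ^ (m - 1 - i.val) := by
    intro i
    rw [← Finset.prod_filter, Finset.prod_const]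
    congr 1
    have : Finset.univ.filter (fun j : Fin m => i < j) = Finset.Ioi i := by
      ext j; simp
    rw [this, Fin.card_Ioi]
  have h4 : (∏ i : Fin m, ∏ j : Fin m, if i < j then v j else 1)
      = ∏ j : Fin m, v j ^ j.val := by
    rw [Finset.prod_comm]
    refine Finset.prod_congr rfl fun j _ => ?_
    rw [← Finset.prod_filter, Finset.prod_const]
    congr 1
    have : Finset.univ.filter (fun i : Fin m => i < j) = Finset.Iio j := by
      ext i; simp
    rw [this, Fin.card_Iio]
  rw [Finset.prod_congr rfl (fun i _ => h3 i), h4, ← Finset.prod_mul_distrib]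
  refine Finset.prod_congr rfl fun i _ => ?_
  rw [← pow_add]
  congr 1
  have := i.isLt
  omega

lemma prod_image_swap (s : Finset (Fin m × Fin m)) (f : Fin m × Fin m → F) :
    ∏ p ∈ s.image Prod.swap, f p = ∏ p ∈ s, f p.swap := by
  rw [Finset.prod_image]
  intro x _ y _ h
  exact Prod.swap_injective h

lemma filter_gt_eq_image_swap (A B : Finset (Fin m)) :
    (A ×ˢ B).filter (fun p => p.2 < p.1)
      = ((B ×ˢ A).filter (fun p : Fin m × Fin m => p.1 < p.2)).image Prod.swap := by
  ext ⟨x, y⟩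
  simp only [Finset.mem_filter, Finset.mem_product, Finset.mem_image, Prod.exists, Prod.swap_prod_mk,
    Prod.mk.injEq]
  constructor
  · rintro ⟨⟨hx, hy⟩, h⟩
    exact ⟨y, x, ⟨⟨hy, hx⟩, h⟩, rfl, rfl⟩
  · rintro ⟨a, b, ⟨⟨ha, hb⟩, h⟩, rfl, rfl⟩
    exact ⟨⟨hb, ha⟩, h⟩

end Aux



section Aux2
variable {F : Type*} [Field F] {m : ℕ}

open scoped Classical in
lemma eAB_eq (w : Fin m → F) (A : Finset (Fin m)) :
    eAB w A Aᶜ = ∏ p ∈ pairsLT m,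
      (if (p.1 ∈ A ↔ p.2 ∈ A) then 1 else (1 - w p.1 * w p.2)) := by
  have h0 : eAB w A Aᶜ = ∏ p ∈ A ×ˢ Aᶜ, (1 - w p.1 * w p.2) := by
    rw [eAB, Finset.prod_product]
  rw [h0, ← Finset.prod_filter_mul_prod_filter_not (A ×ˢ Aᶜ)
    (fun p : Fin m × Fin m => p.1 < p.2)]
  have e1 : (A ×ˢ Aᶜ).filter (fun p : Fin m × Fin m => p.1 < p.2)
      = (pairsLT m).filter (fun p => p.1 ∈ A ∧ p.2 ∉ A) := by
    ext p; simp [pairsLT, Finset.mem_filter, Finset.mem_product, and_comm, and_assoc]; try tauto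
  have e2 : (A ×ˢ Aᶜ).filter (fun p : Fin m × Fin m => ¬ p.1 < p.2)
      = (A ×ˢ Aᶜ).filter (fun p : Fin m × Fin m => p.2 < p.1) := by
    ext p
    simp only [Finset.mem_filter, Finset.mem_product, Finset.mem_compl, and_congr_right_iff]
    rintro ⟨h1, h2⟩
    have hne : p.1 ≠ p.2 := fun h => h2 (h ▸ h1)
    constructor
    · intro h; rcases lt_trichotomy p.1 p.2 with h' | h' | h' <;> first | exact h' | omega | exact absurd h' h | exact absurd h' hne
    · intro h h'; exact absurd (h.trans h') (lt_irrefl _)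
  have e3 : (Aᶜ ×ˢ A).filter (fun p : Fin m × Fin m => p.1 < p.2)
      = (pairsLT m).filter (fun p => p.1 ∉ A ∧ p.2 ∈ A) := by
    ext p; simp [pairsLT, Finset.mem_filter, Finset.mem_product, and_comm, and_assoc]; try tauto
  rw [e1, e2, filter_gt_eq_image_swap, prod_image_swap, e3]
  simp only [Prod.fst_swap, Prod.snd_swap]
  rw [Finset.prod_filter, Finset.prod_filter, ← Finset.prod_mul_distrib]
  refine Finset.prod_congr rfl fun p hp => ?_
  by_cases h1 : p.1 ∈ A <;> by_cases h2 : p.2 ∈ A <;>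
    simp [h1, h2, mul_comm (w p.2) (w p.1)]

open scoped Classical in
lemma delta_eq (w : Fin m → F) (A : Finset (Fin m)) :
    deltaSet w A * deltaSet w Aᶜ = ∏ p ∈ pairsLT m,
      (if (p.1 ∈ A ↔ p.2 ∈ A) then (w p.2 - w p.1) else 1) := by
  have e1 : (A ×ˢ A).filter (fun p : Fin m × Fin m => p.1 < p.2)
      = (pairsLT m).filter (fun p => p.1 ∈ A ∧ p.2 ∈ A) := by
    ext p; simp [pairsLT, Finset.mem_filter, Finset.mem_product]; try tauto
  have e2 : (Aᶜ ×ˢ Aᶜ).filter (fun p : Fin m × Fin m => p.1 < p.2)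
      = (pairsLT m).filter (fun p => p.1 ∉ A ∧ p.2 ∉ A) := by
    ext p; simp [pairsLT, Finset.mem_filter, Finset.mem_product]; try tauto
  rw [deltaSet, deltaSet, e1, e2, Finset.prod_filter, Finset.prod_filter,
    ← Finset.prod_mul_distrib]
  refine Finset.prod_congr rfl fun p hp => ?_
  by_cases h1 : p.1 ∈ A <;> by_cases h2 : p.2 ∈ A <;> simp [h1, h2]

end Aux2





section Aux3
variable {F : Type*} [Field F] {m : ℕ}

open scoped Classical in
lemma sign_eq (A : Finset (Fin m)) :
    (-1 : F) ^ (sAB A Aᶜ - A.card)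
      = ∏ p ∈ pairsLT m, (if p.1 ∈ A then (-1 : F) else 1) := by
  classical
  have hR : ∏ p ∈ pairsLT m, (if p.1 ∈ A then (-1 : F) else 1)
      = (-1 : F) ^ ((pairsLT m).filter (fun p => p.1 ∈ A)).card := by
    rw [← Finset.prod_filter, Finset.prod_const]
  set Q := (pairsLT m).filter (fun p => p.1 ∈ A) with hQ
  have hsplit : (Q.filter (fun p => p.2 ∈ A)).card
      + (Q.filter (fun p => ¬ p.2 ∈ A)).card = Q.card :=
    Finset.card_filter_add_card_filter_not _
  set Q1 := Q.filter (fun p => p.2 ∈ A) with hQ1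
  set Q2 := Q.filter (fun p => ¬ p.2 ∈ A) with hQ2
  have hQ1eq : Q1 = (A ×ˢ A).filter (fun p : Fin m × Fin m => p.1 < p.2) := by
    rw [hQ1, hQ, Finset.filter_filter]
    ext p
    simp [pairsLT, Finset.mem_filter, Finset.mem_product]
    tauto
  have hswapcard : ((A ×ˢ A).filter (fun p : Fin m × Fin m => p.2 < p.1)).card
      = ((A ×ˢ A).filter (fun p : Fin m × Fin m => p.1 < p.2)).card := by
    rw [filter_gt_eq_image_swap A A, Finset.card_image_of_injective _ Prod.swap_injective]
  have hoffsplit : ((A.offDiag).filter (fun p : Fin m × Fin m => p.1 < p.2)).card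
      + ((A.offDiag).filter (fun p : Fin m × Fin m => ¬ p.1 < p.2)).card = A.offDiag.card :=
    Finset.card_filter_add_card_filter_not _
  have hod1 : (A.offDiag).filter (fun p : Fin m × Fin m => p.1 < p.2)
      = (A ×ˢ A).filter (fun p : Fin m × Fin m => p.1 < p.2) := by
    rw [show A.offDiag = (A ×ˢ A).filter (fun a => a.1 ≠ a.2) from by ext; simp [and_assoc],
      Finset.filter_filter]
    ext p
    simp only [Finset.mem_filter, Finset.mem_product, and_congr_right_iff, and_iff_right_iff_imp]
    intro _ h
    exact ne_of_lt h
  have hod2 : (A.offDiag).filter (fun p : Fin m × Fin m => ¬ p.1 < p.2)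
      = (A ×ˢ A).filter (fun p : Fin m × Fin m => p.2 < p.1) := by
    rw [show A.offDiag = (A ×ˢ A).filter (fun a => a.1 ≠ a.2) from by ext; simp [and_assoc],
      Finset.filter_filter]
    ext p
    simp only [Finset.mem_filter, Finset.mem_product, and_congr_right_iff]
    intro _
    constructor
    · rintro ⟨hne, hnlt⟩
      rcases lt_trichotomy p.1 p.2 with h | h | h
      · exact absurd h hnlt
      · exact absurd h hne
      · exact h
    · intro h
      exact ⟨Ne.symm (ne_of_lt h), fun h' => absurd (h.trans h') (lt_irrefl _)⟩
  have hQ1card : 2 * Q1.card = A.card * A.card - A.card := by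
    have h := hoffsplit
    rw [hod1, hod2, hswapcard, Finset.offDiag_card] at h
    rw [hQ1eq]
    omega
  have hQ2eq : Q2 = (A ×ˢ Aᶜ).filter (fun p : Fin m × Fin m => p.1 < p.2) := by
    rw [hQ2, hQ, Finset.filter_filter]
    ext p
    simp [pairsLT, Finset.mem_filter, Finset.mem_product]
    tauto
  have hprodsplit : ((A ×ˢ Aᶜ).filter (fun p : Fin m × Fin m => p.1 < p.2)).card
      + ((A ×ˢ Aᶜ).filter (fun p : Fin m × Fin m => ¬ p.1 < p.2)).card = (A ×ˢ Aᶜ).card :=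
    Finset.card_filter_add_card_filter_not _
  have hneg : (A ×ˢ Aᶜ).filter (fun p : Fin m × Fin m => ¬ p.1 < p.2)
      = (A ×ˢ Aᶜ).filter (fun p : Fin m × Fin m => p.2 < p.1) := by
    ext p
    simp only [Finset.mem_filter, Finset.mem_product, Finset.mem_compl, and_congr_right_iff]
    rintro ⟨h1, h2⟩
    have hne : p.1 ≠ p.2 := fun h => h2 (h ▸ h1)
    constructor
    · intro h
      rcases lt_trichotomy p.1 p.2 with h' | h' | h'
      · exact absurd h' h
      · exact absurd h' hne
      · exact h'
    · intro h h'
      exact absurd (h.trans h') (lt_irrefl _)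
  have hQ2card : Q2.card + wAB A Aᶜ = A.card * Aᶜ.card := by
    have h := hprodsplit
    rw [hneg, Finset.card_product] at h
    rw [hQ2eq, wAB]
    omega
  rw [hR]
  have hpow2 : ((-1 : F)) ^ 2 = 1 := neg_one_sq
  rw [pow_eq_pow_mod _ hpow2, pow_eq_pow_mod Q.card hpow2]
  congr 1
  have hdiv : A.card * (A.card + 1) / 2 * 2 = A.card * (A.card + 1) :=
    Nat.div_mul_cancel (even_iff_two_dvd.mp (Nat.even_mul_succ_self A.card))
  have hsq : A.card * (A.card + 1) = A.card * A.card + A.card := by ring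
  have haa : A.card ≤ A.card * A.card := by nlinarith
  have hS : sAB A Aᶜ = A.card * Aᶜ.card + A.card * (A.card + 1) / 2 + wAB A Aᶜ := rfl
  rw [hS]
  omega

end Aux3

section Master
variable {F : Type*} [Field F] {m : ℕ}

open scoped Classical in
lemma master (w : Fin m → F) (hw0 : ∀ i, w i ≠ 0) (A : Finset (Fin m)) :
    ((∏ a ∈ A, w a) ^ (m - 1) * eAB w A Aᶜ * deltaSet w A * deltaSet w Aᶜ *
      (-1 : F) ^ (sAB A Aᶜ - A.card)) *
      ∏ p ∈ pairsLT m,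
        (1 - w p.1 ^ (-(sg (decide (p.1 ∈ A)))) * w p.2 ^ (-(sg (decide (p.2 ∈ A)))))
    = eLt w Finset.univ * deltaSet w Finset.univ := by
  classical
  have hu : (∏ a ∈ A, w a) ^ (m - 1)
      = ∏ p ∈ pairsLT m,
          ((if p.1 ∈ A then w p.1 else 1) * (if p.2 ∈ A then w p.2 else 1)) := by
    rw [prod_pairsLT_mul (fun i => if i ∈ A then w i else 1)]
    have : ∀ i : Fin m, (if i ∈ A then w i else 1) ^ (m - 1)
        = (if i ∈ A then w i ^ (m - 1) else 1) := by
      intro i; split <;> simp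
    simp_rw [this]
    rw [Finset.prod_ite_mem, Finset.univ_inter, Finset.prod_pow]
  have hc : eAB w A Aᶜ * (deltaSet w A * deltaSet w Aᶜ)
      = ∏ p ∈ pairsLT m,
          (if (p.1 ∈ A ↔ p.2 ∈ A) then (w p.2 - w p.1) else (1 - w p.1 * w p.2)) := by
    rw [eAB_eq w A, delta_eq w A, ← Finset.prod_mul_distrib]
    refine Finset.prod_congr rfl fun p _ => ?_
    by_cases h : (p.1 ∈ A ↔ p.2 ∈ A) <;> simp [h]
  have hs := sign_eq (F := F) (A := A)
  have hE : eLt w Finset.univ = ∏ p ∈ pairsLT m, (1 - w p.1 * w p.2) := by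
    rw [eLt, Finset.univ_product_univ]; rfl
  have hD : deltaSet w Finset.univ = ∏ p ∈ pairsLT m, (w p.2 - w p.1) := by
    rw [deltaSet, Finset.univ_product_univ]; rfl
  calc ((∏ a ∈ A, w a) ^ (m - 1) * eAB w A Aᶜ * deltaSet w A * deltaSet w Aᶜ *
      (-1 : F) ^ (sAB A Aᶜ - A.card)) *
      ∏ p ∈ pairsLT m,
        (1 - w p.1 ^ (-(sg (decide (p.1 ∈ A)))) * w p.2 ^ (-(sg (decide (p.2 ∈ A)))))
      = (∏ p ∈ pairsLT m,
            ((if p.1 ∈ A then w p.1 else 1) * (if p.2 ∈ A then w p.2 else 1))) *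
        (∏ p ∈ pairsLT m,
            (if (p.1 ∈ A ↔ p.2 ∈ A) then (w p.2 - w p.1) else (1 - w p.1 * w p.2))) *
        (∏ p ∈ pairsLT m, (if p.1 ∈ A then (-1 : F) else 1)) *
        (∏ p ∈ pairsLT m,
          (1 - w p.1 ^ (-(sg (decide (p.1 ∈ A)))) * w p.2 ^ (-(sg (decide (p.2 ∈ A)))))) := by
        rw [← hu, ← hc, ← hs]; ring
    _ = ∏ p ∈ pairsLT m,
          (((if p.1 ∈ A then w p.1 else 1) * (if p.2 ∈ A then w p.2 else 1)) *
            (if (p.1 ∈ A ↔ p.2 ∈ A) then (w p.2 - w p.1) else (1 - w p.1 * w p.2)) *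
            (if p.1 ∈ A then (-1 : F) else 1) *
            (1 - w p.1 ^ (-(sg (decide (p.1 ∈ A)))) * w p.2 ^ (-(sg (decide (p.2 ∈ A)))))) := by
        rw [← Finset.prod_mul_distrib, ← Finset.prod_mul_distrib, ← Finset.prod_mul_distrib]
    _ = ∏ p ∈ pairsLT m, ((1 - w p.1 * w p.2) * (w p.2 - w p.1)) := by
        refine Finset.prod_congr rfl fun p hp => ?_
        have h1 : w p.1 ≠ 0 := hw0 p.1
        have h2 : w p.2 ≠ 0 := hw0 p.2
        by_cases hA1 : p.1 ∈ A <;> by_cases hA2 : p.2 ∈ A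
        · rw [decide_eq_true hA1, decide_eq_true hA2]
          simp only [sg, hA1, hA2, if_true, iff_true, zpow_neg, zpow_one]
          field_simp
          ring
        · rw [decide_eq_true hA1, decide_eq_false hA2]
          simp only [sg, hA1, hA2, if_true, if_false, iff_false, not_true, zpow_neg, zpow_one, Bool.false_eq_true,
            neg_neg, ite_true, ite_false]
          field_simp
          ring
        · rw [decide_eq_false hA1, decide_eq_true hA2]
          simp only [sg, hA1, hA2, if_true, if_false, iff_true, iff_false, zpow_neg, zpow_one, Bool.false_eq_true,
            neg_neg, ite_true, ite_false]
          field_simp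
        · rw [decide_eq_false hA1, decide_eq_false hA2]
          simp only [sg, hA1, hA2, if_false, iff_false, iff_true, not_false_iff, zpow_neg, Bool.false_eq_true,
            zpow_one, neg_neg, ite_true, ite_false]
          field_simp
    _ = eLt w Finset.univ * deltaSet w Finset.univ := by
        rw [hE, hD, Finset.prod_mul_distrib]

end Master


open scoped Classical in
/-- Sign/epsilon rewriting of the orthogonal determinant-sum.  The boolean `π`
records the parity (`true` = odd, `false` = even) of `|B|`. -/
theorem stmt17 {F : Type*} [Field F] (m n : ℕ) (hm : 1 ≤ m) (hn : m ≤ n + 1)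
    (heven : Even (n + 1 - m)) (π : Bool)
    (w : Fin m → F) (hw0 : ∀ i, w i ≠ 0)
    (hdist : ∀ i j : Fin m, i ≠ j → w i ≠ w j)
    (hprod : ∀ i j : Fin m, i ≠ j → w i * w j ≠ 1) :
    (eLt w Finset.univ * deltaSet w Finset.univ)⁻¹ *
      ∑ A ∈ Finset.univ.filter
          (fun A : Finset (Fin m) => Aᶜ.card % 2 = (if π then 1 else 0)),
        (∏ a ∈ A, w a) ^ n * eAB w A Aᶜ * deltaSet w A * deltaSet w Aᶜ *
          (-1 : F) ^ (sAB A Aᶜ - A.card)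
    = (∏ j, w j) ^ ((n + 1 - m) / 2) *
        ∑ ε ∈ Finset.univ.filter
            (fun ε : Fin m → Bool =>
              (Finset.univ.filter (fun j => ε j = false)).card % 2
                = (if π then 1 else 0)),
          (∏ l, w l ^ (sg (ε l) * (((n + 1 - m) / 2 : ℕ) : ℤ))) *
            ∏ p ∈ Finset.univ.filter (fun p : Fin m × Fin m => p.1 < p.2),
              (1 - w p.1 ^ (-(sg (ε p.1))) * w p.2 ^ (-(sg (ε p.2))))⁻¹ := by
  classical
  set k := (n + 1 - m) / 2 with hk
  have h2k : 2 * k = n + 1 - m := by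
    obtain ⟨r, hr⟩ := heven
    omega
  have hnk : n = (m - 1) + 2 * k := by omega
  have hE0 : eLt w Finset.univ ≠ 0 := by
    rw [eLt, Finset.prod_ne_zero_iff]
    intro p hp
    simp only [Finset.mem_filter] at hp
    exact sub_ne_zero.mpr fun h => hprod p.1 p.2 (ne_of_lt hp.2) h.symm
  have hD0 : deltaSet w Finset.univ ≠ 0 := by
    rw [deltaSet, Finset.prod_ne_zero_iff]
    intro p hp
    simp only [Finset.mem_filter] at hp
    exact sub_ne_zero.mpr (hdist p.2 p.1 (ne_of_gt hp.2))
  have hX0 : eLt w Finset.univ * deltaSet w Finset.univ ≠ 0 := mul_ne_zero hE0 hD0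
  rw [Finset.mul_sum, Finset.mul_sum]
  refine Finset.sum_bij' (fun A _ => fun j => decide (j ∈ A))
    (fun ε _ => Finset.univ.filter (fun j => ε j = true)) ?_ ?_ ?_ ?_ ?_
  · -- hi
    intro A hA
    simp only [Finset.mem_filter, Finset.mem_univ, true_and] at hA ⊢
    have : Finset.univ.filter (fun j : Fin m => decide (j ∈ A) = false) = Aᶜ := by
      ext j; simp
    rw [this]
    exact hA
  · -- hj
    intro ε hε
    simp only [Finset.mem_filter, Finset.mem_univ, true_and] at hε ⊢
    have : (Finset.univ.filter (fun j : Fin m => ε j = true))ᶜ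
        = Finset.univ.filter (fun j : Fin m => ε j = false) := by
      ext j; simp
    rw [this]
    exact hε
  · -- left_inv
    intro A hA
    ext j
    simp
  · -- right_inv
    intro ε hε
    funext j
    show decide (j ∈ Finset.univ.filter (fun j => ε j = true)) = ε j
    by_cases h : ε j = true
    · rw [decide_eq_true (by simp [h])]
      exact h.symm
    · rw [decide_eq_false (by simp [h])]
      simp only [Bool.not_eq_true] at h
      exact h.symm
  · -- value equality
    intro A hA
    simp only []
    have hP : Finset.univ.filter (fun p : Fin m × Fin m => p.1 < p.2) = pairsLT m := rfl
    rw [hP, Finset.prod_inv_distrib]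
    have hmerge : (∏ j, w j) ^ k * (∏ l, w l ^ (sg (decide (l ∈ A)) * (k : ℤ)))
        = (∏ a ∈ A, w a) ^ (2 * k) := by
      rw [← Finset.prod_pow, ← Finset.prod_mul_distrib]
      have hl : ∀ l : Fin m, w l ^ k * w l ^ (sg (decide (l ∈ A)) * (k : ℤ))
          = (if l ∈ A then w l ^ (2 * k) else 1) := by
        intro l
        by_cases h : l ∈ A
        · rw [decide_eq_true h, if_pos h]
          rw [show sg true = 1 from rfl, one_mul, zpow_natCast, ← pow_add, two_mul]
        · rw [decide_eq_false h, if_neg h]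
          rw [show sg false = -1 from rfl, neg_mul, one_mul, zpow_neg, zpow_natCast]
          exact mul_inv_cancel₀ (pow_ne_zero _ (hw0 l))
      simp_rw [hl]
      rw [Finset.prod_ite_mem, Finset.univ_inter, Finset.prod_pow]
    conv_rhs => rw [← mul_assoc, hmerge]
    have hmaster := master w hw0 A
    set T := ∏ p ∈ pairsLT m,
        (1 - w p.1 ^ (-(sg (decide (p.1 ∈ A)))) * w p.2 ^ (-(sg (decide (p.2 ∈ A))))) with hTdef
    have hT0 : T ≠ 0 := right_ne_zero_of_mul (ne_of_eq_of_ne hmaster hX0)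
    rw [hnk, pow_add]
    field_simp
    linear_combination ((∏ a ∈ A, w a) ^ (2 * k)) * hmaster
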